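/- arXiv:math/0005263 — 3 statements merged into one kernel-verified Lean document; each statement's English description precedes it below -/
import Mathlib

section
/- Let n ≥ 1 and let A ⊆ C_n be a nonempty subset. Set ρ = 1/2 − Δ(A)/n, so that 0 ≤ ρ ≤ 1/2. Then 1 − H(1/2 − ρ) ≤ (log₂|A|)/n ≤ H(ρ). -/
/-- The Hamming distance from a point `a` of the Boolean cube to a subset `A`. -/
noncomputable def distToSet {ι : Type*} [Fintype ι] (a : ι → Bool) (A : Set (ι → Bool)) : ℕ :=
  sInf ((fun b => hammingDist a b) '' A)

/-- The average Hamming distance from a point of the Boolean cube to a subset `A`. -/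
noncomputable def avgDist {ι : Type*} [Fintype ι] [DecidableEq ι] (A : Set (ι → Bool)) : ℝ :=
  (2 ^ Fintype.card ι : ℝ)⁻¹ * ∑ x : ι → Bool, (distToSet x A : ℝ)

/-- The binary entropy function `H(x) = x log₂(1/x) + (1-x) log₂(1/(1-x))`
(with the convention `H(0) = 0`, which holds automatically since `Real.log 0 = 0`). -/
noncomputable def binEnt (x : ℝ) : ℝ :=
  x * Real.logb 2 (1 / x) + (1 - x) * Real.logb 2 (1 / (1 - x))

/-!
Lower bound: put `δ = Δ(A)/n` and `s = δ/(1-δ)`. Jensen's inequality for `t ↦ s^t` gives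
`2^n s^{Δ(A)} ≤ ∑ₓ s^{dist(x,A)}`, and bounding `s^{dist(x,A)}` by `∑_{a∈A} s^{dist(x,a)}` gives
`∑ₓ s^{dist(x,A)} ≤ |A| (1+s)^n`; taking logarithms yields `n (1 - H(δ)) ≤ log₂|A|`.

Upper bound: induction on `n`, splitting `A` by its first coordinate into fibers `A₀, A₁` of
proportions `α, 1-α`. Since `dist((b,y), A) ≤ min(dist(y, A_b), 1 + dist(y, A_{¬b}))`,
`Δ(A) ≤ α Δ(A₀) + (1-α) Δ(A₁) + |1-2α|/2`. The chain rule
`log₂|A| = α log₂|A₀| + (1-α) log₂|A₁| + H(α)`, concavity of `H` (used twice) and its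
monotonicity on `[0, 1/2]` then close the induction.
-/

open Real Set

theorem binEnt_eq_binEntropy_div (x : ℝ) : binEnt x = binEntropy x / log 2 := by
  simp only [binEnt, binEntropy, logb, one_div, log_inv]
  ring

theorem binEnt_nonneg {x : ℝ} (h0 : 0 ≤ x) (h1 : x ≤ 1) : 0 ≤ binEnt x := by
  rw [binEnt_eq_binEntropy_div]
  exact div_nonneg (binEntropy_nonneg h0 h1) (log_nonneg one_le_two)

theorem binEnt_one_sub (x : ℝ) : binEnt (1 - x) = binEnt x := by
  rw [binEnt_eq_binEntropy_div, binEnt_eq_binEntropy_div, binEntropy_one_sub]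

theorem binEnt_min_one_sub (x : ℝ) : binEnt (min x (1 - x)) = binEnt x := by
  rcases min_choice x (1 - x) with h | h <;> rw [h]
  exact binEnt_one_sub x

theorem monotoneOn_binEnt : MonotoneOn binEnt (Icc 0 (1 / 2)) := by
  intro x hx y hy hxy
  simp only [binEnt_eq_binEntropy_div]
  rw [one_div] at hx hy
  gcongr
  exact binEntropy_strictMonoOn.monotoneOn hx hy hxy

theorem concaveOn_binEnt : ConcaveOn ℝ (Icc 0 1) binEnt := by
  have h : binEnt = fun x => (log 2)⁻¹ • binEntropy x := by
    ext x
    rw [binEnt_eq_binEntropy_div, smul_eq_mul, div_eq_inv_mul]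
  rw [h]
  exact strictConcave_binEntropy.concaveOn.smul (inv_nonneg.2 (log_nonneg one_le_two))

theorem logb_eq_add_binEnt {M α : ℝ} (hM : 0 < M) :
    logb 2 M = α * logb 2 (α * M) + (1 - α) * logb 2 ((1 - α) * M) + binEnt α := by
  have key : ∀ x : ℝ, x * logb 2 (x * M) + x * logb 2 (1 / x) = x * logb 2 M := by
    intro x
    rcases eq_or_ne x 0 with rfl | hx
    · simp
    · rw [← mul_add, ← logb_mul (by positivity) (by positivity),
        show x * M * (1 / x) = M by field_simp]
  rw [binEnt]
  linear_combination -key α - key (1 - α)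

theorem mul_binEnt_add_mul_binEnt_le {a b p q : ℝ} (ha : 0 ≤ a) (hb : 0 ≤ b) (hab : 0 < a + b)
    (hp : p ∈ Icc (0 : ℝ) 1) (hq : q ∈ Icc (0 : ℝ) 1) :
    a * binEnt p + b * binEnt q ≤ (a + b) * binEnt ((a * p + b * q) / (a + b)) := by
  have h := concaveOn_binEnt.2 hp hq (div_nonneg ha hab.le) (div_nonneg hb hab.le)
    (by field_simp)
  simp only [smul_eq_mul] at h
  calc a * binEnt p + b * binEnt q
      = (a + b) * (a / (a + b) * binEnt p + b / (a + b) * binEnt q) := by field_simp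
    _ ≤ (a + b) * binEnt (a / (a + b) * p + b / (a + b) * q) := by gcongr
    _ = (a + b) * binEnt ((a * p + b * q) / (a + b)) := by congr 2; field_simp

theorem half_sub_div_mem_Icc {k D : ℝ} (hD : D ∈ Icc 0 (k / 2)) :
    1 / 2 - D / k ∈ Icc (0 : ℝ) (1 / 2) := by
  obtain ⟨hD0, hDk⟩ := hD
  rcases (show 0 ≤ k by linarith).eq_or_lt with rfl | hk
  · simp
  · constructor
    · rw [sub_nonneg, div_le_iff₀ hk]; linarith
    · linarith [div_nonneg hD0 hk.le]

theorem mul_half_sub_div {k D : ℝ} (hD : D ∈ Icc 0 (k / 2)) :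
    k * (1 / 2 - D / k) = k / 2 - D := by
  obtain ⟨hD0, hDk⟩ := hD
  rcases (show 0 ≤ k by linarith).eq_or_lt with rfl | hk
  · simp [le_antisymm (by simpa using hDk) hD0]
  · field_simp

theorem abs_one_sub_two_mul {α : ℝ} : |1 - 2 * α| = 1 - 2 * min α (1 - α) := by
  rcases le_total α (1 / 2) with h | h
  · rw [abs_of_nonneg (by linarith), min_eq_left (by linarith)]
  · rw [abs_of_nonpos (by linarith), min_eq_right (by linarith)]; ring

theorem logb_le_succ_mul_binEnt {k : ℕ} {α M D D₀ D₁ : ℝ} (hα : α ∈ Icc (0 : ℝ) 1)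
    (hM : 0 < M) (hD : 0 ≤ D) (hD₀ : D₀ ∈ Icc 0 ((k : ℝ) / 2)) (hD₁ : D₁ ∈ Icc 0 ((k : ℝ) / 2))
    (h₀ : logb 2 (α * M) ≤ k * binEnt (1 / 2 - D₀ / k))
    (h₁ : logb 2 ((1 - α) * M) ≤ k * binEnt (1 / 2 - D₁ / k))
    (hD_le : D ≤ α * D₀ + (1 - α) * D₁ + |1 - 2 * α| / 2) :
    logb 2 M ≤ (k + 1) * binEnt (1 / 2 - D / (k + 1)) := by
  obtain ⟨hα0, hα1⟩ := hα
  set r₀ := 1 / 2 - D₀ / k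
  set r₁ := 1 / 2 - D₁ / k
  set m := min α (1 - α)
  have hr₀ : r₀ ∈ Icc (0 : ℝ) (1 / 2) := half_sub_div_mem_Icc hD₀
  have hr₁ : r₁ ∈ Icc (0 : ℝ) (1 / 2) := half_sub_div_mem_Icc hD₁
  have hm : m ∈ Icc (0 : ℝ) (1 / 2) :=
    ⟨le_min hα0 (by linarith), by linarith [min_le_left α (1 - α), min_le_right α (1 - α)]⟩
  have hp : α * r₀ + (1 - α) * r₁ ∈ Icc (0 : ℝ) (1 / 2) :=
    convex_Icc 0 (1 / 2) hr₀ hr₁ hα0 (sub_nonneg.2 hα1) (by ring)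
  have hz : (k * (α * r₀ + (1 - α) * r₁) + 1 * m) / (k + 1) ≤ 1 / 2 - D / (k + 1) := by
    have hkp : k * (α * r₀ + (1 - α) * r₁) = k / 2 - (α * D₀ + (1 - α) * D₁) := by
      linear_combination α * mul_half_sub_div hD₀ + (1 - α) * mul_half_sub_div hD₁
    rw [show 1 / 2 - D / (k + 1) = ((k + 1) / 2 - D) / (k + 1) by field_simp, hkp]
    gcongr
    linarith [abs_one_sub_two_mul (α := α)]
  calc logb 2 M = α * logb 2 (α * M) + (1 - α) * logb 2 ((1 - α) * M) + binEnt α :=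
        logb_eq_add_binEnt hM
    _ ≤ α * (k * binEnt r₀) + (1 - α) * (k * binEnt r₁) + binEnt m := by
        rw [binEnt_min_one_sub]
        gcongr
    _ = k * (α * binEnt r₀ + (1 - α) * binEnt r₁) + 1 * binEnt m := by ring
    _ ≤ k * binEnt (α * r₀ + (1 - α) * r₁) + 1 * binEnt m := by
        gcongr
        have := concaveOn_binEnt.2 ⟨hr₀.1, by linarith [hr₀.2]⟩ ⟨hr₁.1, by linarith [hr₁.2]⟩
          hα0 (sub_nonneg.2 hα1) (by ring)
        simpa only [smul_eq_mul] using this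
    _ ≤ (k + 1) * binEnt ((k * (α * r₀ + (1 - α) * r₁) + 1 * m) / (k + 1)) :=
        mul_binEnt_add_mul_binEnt_le (by positivity) zero_le_one (by positivity)
          ⟨hp.1, by linarith [hp.2]⟩ ⟨hm.1, by linarith [hm.2]⟩
    _ ≤ (k + 1) * binEnt (1 / 2 - D / (k + 1)) := by
        have hz₀ : 0 ≤ (k * (α * r₀ + (1 - α) * r₁) + 1 * m) / (k + 1) := by
          have := hp.1; have := hm.1; positivity
        have : 0 ≤ D / (k + 1) := by positivity
        gcongr
        exact monotoneOn_binEnt ⟨hz₀, by linarith⟩ ⟨hz₀.trans hz, by linarith⟩ hz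

theorem mul_one_sub_binEnt_le_logb {n : ℕ} {δ M : ℝ} (hδ₀ : 0 < δ) (hδ₁ : δ < 1) (hM : 0 < M)
    (h : 2 ^ n * (δ / (1 - δ)) ^ (n * δ) ≤ M * (1 + δ / (1 - δ)) ^ n) :
    n * (1 - binEnt δ) ≤ logb 2 M := by
  have h1δ : 0 < 1 - δ := by linarith
  have hlog := logb_le_logb_of_le one_lt_two (by positivity) h
  rw [logb_mul (by positivity) (by positivity), logb_mul (by positivity) (by positivity),
    logb_pow, logb_pow, logb_self_eq_one one_lt_two,
    logb_rpow_eq_mul_logb_of_pos (by positivity), logb_div hδ₀.ne' h1δ.ne',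
    show 1 + δ / (1 - δ) = (1 - δ)⁻¹ by field_simp; ring, logb_inv] at hlog
  have hH : binEnt δ = -(δ * logb 2 δ) - (1 - δ) * logb 2 (1 - δ) := by
    simp only [binEnt, one_div, logb_inv]; ring
  rw [hH]
  linarith

section
open Finset
variable {ι : Type*} [Fintype ι]

theorem distToSet_le_hammingDist {A : Set (ι → Bool)} {a b : ι → Bool} (hb : b ∈ A) :
    distToSet a A ≤ hammingDist a b :=
  Nat.sInf_le ⟨b, hb, rfl⟩

theorem exists_hammingDist_eq_distToSet {A : Set (ι → Bool)} (hA : A.Nonempty) (a : ι → Bool) :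
    ∃ b ∈ A, hammingDist a b = distToSet a A :=
  Nat.sInf_mem (hA.image _)

theorem hammingDist_add_hammingDist_not (x b : ι → Bool) :
    hammingDist x b + hammingDist (fun i => !x i) b = Fintype.card ι := by
  have : hammingDist (fun i => !x i) b = #{i | ¬x i ≠ b i} := by
    unfold hammingDist
    congr 1
    ext i
    cases x i <;> cases b i <;> simp
  rw [this, hammingDist, card_filter_add_card_filter_not, card_univ]

theorem distToSet_empty (a : ι → Bool) : distToSet a ∅ = 0 := by
  simp [distToSet]

variable [DecidableEq ι]

theorem sum_hammingDist (b : ι → Bool) :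
    2 * ∑ x : ι → Bool, hammingDist x b = Fintype.card ι * 2 ^ Fintype.card ι := by
  have hnot : Function.Involutive fun (x : ι → Bool) i => !x i := fun x => by simp
  calc 2 * ∑ x : ι → Bool, hammingDist x b
      = ∑ x : ι → Bool, (hammingDist x b + hammingDist (fun i => !x i) b) := by
        rw [sum_add_distrib, two_mul]
        congr 1
        exact (Equiv.sum_comp (hnot.toPerm _) (hammingDist · b)).symm
    _ = Fintype.card ι * 2 ^ Fintype.card ι := by
        simp [hammingDist_add_hammingDist_not, mul_comm]

theorem sum_pow_hammingDist {R : Type*} [CommSemiring R] (s : R) (a : ι → Bool) :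
    ∑ x : ι → Bool, s ^ hammingDist x a = (1 + s) ^ Fintype.card ι := by
  have h : ∀ x : ι → Bool, s ^ hammingDist x a = ∏ i, if x i ≠ a i then s else 1 := by
    intro x
    rw [prod_ite, prod_const_one, mul_one, prod_const, hammingDist]
  simp_rw [h]
  rw [← Fintype.prod_sum fun i (c : Bool) => if c ≠ a i then s else 1, ← card_univ,
    ← prod_const]
  refine prod_congr rfl fun i _ => ?_
  cases a i <;> simp [add_comm]

theorem avgDist_nonneg (A : Set (ι → Bool)) : 0 ≤ avgDist A := by
  unfold avgDist; positivity

theorem avgDist_le_half_card (A : Set (ι → Bool)) : avgDist A ≤ Fintype.card ι / 2 := by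
  rcases A.eq_empty_or_nonempty with rfl | ⟨b, hb⟩
  · -- `distToSet x ∅` is the junk value `sInf ∅ = 0`; this case is needed for empty fibers.
    simp [avgDist, distToSet_empty]
    positivity
  · have hsum : ∑ x : ι → Bool, (distToSet x A : ℝ) ≤ ∑ x : ι → Bool, (hammingDist x b : ℝ) :=
      sum_le_sum fun x _ => by exact_mod_cast distToSet_le_hammingDist hb
    have h2 : 2 * ∑ x : ι → Bool, (hammingDist x b : ℝ) =
        Fintype.card ι * 2 ^ Fintype.card ι := by
      exact_mod_cast sum_hammingDist b
    unfold avgDist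
    rw [inv_mul_le_iff₀ (by positivity)]
    linarith

theorem eq_univ_of_avgDist_eq_zero {A : Set (ι → Bool)} (hA : A.Nonempty)
    (h : avgDist A = 0) : A = Set.univ := by
  refine Set.eq_univ_of_forall fun x => ?_
  have hsum : ∑ x : ι → Bool, (distToSet x A : ℝ) = 0 := by
    simpa [avgDist] using h
  have hx : distToSet x A = 0 := by
    exact_mod_cast (sum_eq_zero_iff_of_nonneg fun _ _ => by positivity).1 hsum x (mem_univ x)
  obtain ⟨b, hb, hxb⟩ := exists_hammingDist_eq_distToSet hA x
  rw [hx, hammingDist_eq_zero] at hxb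
  rwa [hxb]

theorem rpow_avgDist_le {s : ℝ} (hs : 0 < s) (A : Set (ι → Bool)) :
    s ^ avgDist A ≤ (2 ^ Fintype.card ι : ℝ)⁻¹ * ∑ x : ι → Bool, s ^ distToSet x A := by
  have hw : ∑ _x : ι → Bool, (2 ^ Fintype.card ι : ℝ)⁻¹ = 1 := by
    simp [card_univ]
  have h := convexOn_exp.map_sum_le (t := univ) (w := fun _ => (2 ^ Fintype.card ι : ℝ)⁻¹)
    (p := fun x => log s * distToSet x A) (fun _ _ => by positivity) hw (fun _ _ => mem_univ _)
  simp only [smul_eq_mul, ← mul_sum] at h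
  calc s ^ avgDist A
      = exp ((2 ^ Fintype.card ι : ℝ)⁻¹ * (log s * ∑ x : ι → Bool, (distToSet x A : ℝ))) := by
        rw [rpow_def_of_pos hs, avgDist]; ring_nf
    _ ≤ _ := h
    _ = _ := by simp only [← rpow_natCast, rpow_def_of_pos hs]

theorem sum_pow_distToSet_le {s : ℝ} (hs : 0 ≤ s) {A : Set (ι → Bool)} (hA : A.Nonempty) :
    ∑ x : ι → Bool, s ^ distToSet x A ≤ Nat.card A * (1 + s) ^ Fintype.card ι := by
  classical
  calc ∑ x : ι → Bool, s ^ distToSet x A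
      ≤ ∑ x : ι → Bool, ∑ a ∈ A.toFinset, s ^ hammingDist x a := by
        refine sum_le_sum fun x _ => ?_
        obtain ⟨b, hb, hxb⟩ := exists_hammingDist_eq_distToSet hA x
        rw [← hxb]
        exact single_le_sum (f := fun a => s ^ hammingDist x a) (fun _ _ => by positivity)
          (Set.mem_toFinset.2 hb)
    _ = Nat.card A * (1 + s) ^ Fintype.card ι := by
        rw [sum_comm]
        simp [sum_pow_hammingDist]

theorem card_mul_one_sub_binEnt_le_logb_card {A : Set (ι → Bool)} (hA : A.Nonempty) :
    Fintype.card ι * (1 - binEnt (avgDist A / Fintype.card ι)) ≤ logb 2 (Nat.card A) := by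
  set n := Fintype.card ι
  rcases (avgDist_nonneg A).eq_or_lt with hD | hD
  · rw [← hD, eq_univ_of_avgDist_eq_zero hA hD.symm, Nat.card_univ, Nat.card_eq_fintype_card,
      Fintype.card_fun, Fintype.card_bool]
    simp [binEnt, n, logb_pow]
  · have hn : (0 : ℝ) < n := by linarith [avgDist_le_half_card A]
    set δ := avgDist A / n
    have hδ₀ : 0 < δ := by positivity
    have hδ₁ : δ ≤ 1 / 2 := by
      rw [div_le_iff₀ hn]; linarith [avgDist_le_half_card A]
    have hs : 0 < δ / (1 - δ) := div_pos hδ₀ (by linarith)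
    have hcard : (0 : ℝ) < Nat.card A := by
      have := hA.to_subtype
      exact_mod_cast Nat.card_pos
    refine mul_one_sub_binEnt_le_logb hδ₀ (by linarith) hcard ?_
    calc (2 : ℝ) ^ n * (δ / (1 - δ)) ^ (n * δ)
        = 2 ^ n * (δ / (1 - δ)) ^ avgDist A := by rw [mul_div_cancel₀ _ hn.ne']
      _ ≤ ∑ x : ι → Bool, (δ / (1 - δ)) ^ distToSet x A := by
        exact (le_inv_mul_iff₀ (by positivity)).1 (rpow_avgDist_le hs A)
      _ ≤ Nat.card A * (1 + δ / (1 - δ)) ^ n := sum_pow_distToSet_le hs.le hA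

end

section
open Finset
variable {k : ℕ}

def fiber (A : Set (Fin (k + 1) → Bool)) (b : Bool) : Set (Fin k → Bool) :=
  {y | Fin.cons b y ∈ A}

theorem sum_cube_succ {M : Type*} [AddCommMonoid M] (f : (Fin (k + 1) → Bool) → M) :
    ∑ x, f x = ∑ y, (f (Fin.cons false y) + f (Fin.cons true y)) := by
  rw [← (Fin.consEquiv fun _ => Bool).sum_comp, Fintype.sum_prod_type, Fintype.sum_bool,
    ← sum_add_distrib]
  exact sum_congr rfl fun y _ => add_comm _ _

theorem card_eq_card_fiber_add (A : Set (Fin (k + 1) → Bool)) :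
    Nat.card A = Nat.card (fiber A false) + Nat.card (fiber A true) := by
  classical
  simp only [Nat.card_eq_fintype_card, Fintype.card_subtype, card_filter]
  rw [sum_cube_succ, sum_add_distrib]
  rfl

theorem hammingDist_cons (b c : Bool) (y z : Fin k → Bool) :
    hammingDist (Fin.cons b y : Fin (k + 1) → Bool) (Fin.cons c z) =
      (if b = c then 0 else 1) + hammingDist y z := by
  simp only [hammingDist, card_filter, Fin.sum_univ_succ, Fin.cons_zero, Fin.cons_succ, ne_eq]
  congr 1
  split_ifs <;> simp_all

theorem distToSet_cons_le {A : Set (Fin (k + 1) → Bool)} {c : Bool} (hc : (fiber A c).Nonempty)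
    (b : Bool) (y : Fin k → Bool) :
    distToSet (Fin.cons b y) A ≤ (if b = c then 0 else 1) + distToSet y (fiber A c) := by
  obtain ⟨z, hz, hyz⟩ := exists_hammingDist_eq_distToSet hc y
  calc distToSet (Fin.cons b y) A
      ≤ hammingDist (Fin.cons b y : Fin (k + 1) → Bool) (Fin.cons c z) :=
        distToSet_le_hammingDist hz
    _ = (if b = c then 0 else 1) + distToSet y (fiber A c) := by rw [hammingDist_cons, hyz]

theorem add_le_of_fiber_bounds {a b d₀ d₁ α : ℝ} (hα : α ∈ Set.Icc (0 : ℝ) 1)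
    (h₀ : 0 < α → a ≤ d₀ ∧ b ≤ 1 + d₀) (h₁ : α < 1 → a ≤ 1 + d₁ ∧ b ≤ d₁) :
    a + b ≤ 2 * (α * d₀ + (1 - α) * d₁) + |1 - 2 * α| := by
  obtain ⟨hα₀, hα₁⟩ := hα
  -- For `α ≤ 1/2`: `a ≤ 2α d₀ + (1 - 2α)(1 + d₁)` as a convex combination, and `b ≤ d₁`.
  rcases le_total α (1 / 2) with h | h
  · obtain ⟨ha₁, hb₁⟩ := h₁ (by linarith)
    have ha₀ : α * a ≤ α * d₀ := by
      rcases hα₀.eq_or_lt with rfl | hα₀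
      · simp
      · exact mul_le_mul_of_nonneg_left (h₀ hα₀).1 hα₀.le
    rw [abs_of_nonneg (by linarith)]
    nlinarith [mul_le_mul_of_nonneg_left ha₁ (by linarith : 0 ≤ 1 - 2 * α)]
  · obtain ⟨ha₀, hb₀⟩ := h₀ (by linarith)
    have hb₁ : (1 - α) * b ≤ (1 - α) * d₁ := by
      rcases (sub_nonneg.2 hα₁).eq_or_lt with h' | h'
      · simp [← h']
      · exact mul_le_mul_of_nonneg_left (h₁ (by linarith)).2 h'.le
    rw [abs_of_nonpos (by linarith)]
    nlinarith [mul_le_mul_of_nonneg_left hb₀ (by linarith : 0 ≤ 2 * α - 1)]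

theorem avgDist_le_of_fibers {A : Set (Fin (k + 1) → Bool)} {α : ℝ}
    (hα : α ∈ Set.Icc (0 : ℝ) 1) (h₀ : 0 < α → (fiber A false).Nonempty)
    (h₁ : α < 1 → (fiber A true).Nonempty) :
    avgDist A ≤
      α * avgDist (fiber A false) + (1 - α) * avgDist (fiber A true) + |1 - 2 * α| / 2 := by
  have hd : ∀ {c : Bool}, (fiber A c).Nonempty → ∀ b y,
      (distToSet (Fin.cons b y) A : ℝ) ≤ (if b = c then 0 else 1) + distToSet y (fiber A c) :=
    fun hc b y => by exact_mod_cast distToSet_cons_le hc b y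
  have hpt : ∀ y : Fin k → Bool,
      (distToSet (Fin.cons false y) A : ℝ) + distToSet (Fin.cons true y) A ≤
        2 * (α * distToSet y (fiber A false) + (1 - α) * distToSet y (fiber A true)) +
          |1 - 2 * α| := fun y =>
    add_le_of_fiber_bounds hα
      (fun h => ⟨by simpa using hd (h₀ h) false y, by simpa using hd (h₀ h) true y⟩)
      (fun h => ⟨by simpa using hd (h₁ h) false y, by simpa using hd (h₁ h) true y⟩)
  calc avgDist A = (2 ^ (k + 1) : ℝ)⁻¹ * ∑ y : Fin k → Bool,
        ((distToSet (Fin.cons false y) A : ℝ) + distToSet (Fin.cons true y) A) := by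
        rw [avgDist, Fintype.card_fin, sum_cube_succ]
    _ ≤ (2 ^ (k + 1) : ℝ)⁻¹ * ∑ y : Fin k → Bool,
        (2 * (α * distToSet y (fiber A false) + (1 - α) * distToSet y (fiber A true)) +
          |1 - 2 * α|) :=
        mul_le_mul_of_nonneg_left (sum_le_sum fun y _ => hpt y) (by positivity)
    _ = α * avgDist (fiber A false) + (1 - α) * avgDist (fiber A true) + |1 - 2 * α| / 2 := by
        simp only [avgDist, Fintype.card_fin, sum_add_distrib, ← mul_sum, sum_const, card_univ,
          Fintype.card_fun, Fintype.card_bool, nsmul_eq_mul]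
        push_cast
        field_simp
        ring

end

theorem avgDist_mem_Icc {n : ℕ} (A : Set (Fin n → Bool)) : avgDist A ∈ Icc 0 ((n : ℝ) / 2) :=
  ⟨avgDist_nonneg A, by simpa using avgDist_le_half_card A⟩

theorem logb_card_le_mul_binEnt :
    ∀ {n : ℕ} {A : Set (Fin n → Bool)}, A.Nonempty →
      logb 2 (Nat.card A) ≤ n * binEnt (1 / 2 - avgDist A / n)
  | 0, A, hA => by
    have : Nat.card A = 1 := by
      have := hA.to_subtype
      exact Nat.card_unique
    simp [this]
  | k + 1, A, hA => by
    have hM : (Nat.card A : ℝ) = Nat.card (fiber A false) + Nat.card (fiber A true) := by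
      exact_mod_cast card_eq_card_fiber_add A
    have hM₀ : (0 : ℝ) < Nat.card A := by
      have := hA.to_subtype
      exact_mod_cast Nat.card_pos
    set M := (Nat.card A : ℝ)
    set α := (Nat.card (fiber A false) : ℝ) / M
    have hαM : α * M = Nat.card (fiber A false) := div_mul_cancel₀ _ hM₀.ne'
    have hα'M : (1 - α) * M = Nat.card (fiber A true) := by linear_combination hM - hαM
    have hα : α ∈ Icc (0 : ℝ) 1 :=
      ⟨by positivity, div_le_one_of_le₀ (by rw [hM]; simp) hM₀.le⟩
    have hfiber : ∀ b,
        logb 2 (Nat.card (fiber A b)) ≤ k * binEnt (1 / 2 - avgDist (fiber A b) / k) := by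
      intro b
      rcases (fiber A b).eq_empty_or_nonempty with h | h
      · have := half_sub_div_mem_Icc (avgDist_mem_Icc (fiber A b))
        rw [h] at this ⊢
        simp only [Nat.card_of_isEmpty, Nat.cast_zero, logb_zero]
        exact mul_nonneg k.cast_nonneg (binEnt_nonneg this.1 (by linarith [this.2]))
      · exact logb_card_le_mul_binEnt h
    have hne : ∀ b, (0 : ℝ) < Nat.card (fiber A b) → (fiber A b).Nonempty := fun b h =>
      Set.nonempty_coe_sort.1 (Nat.card_pos_iff.1 (by exact_mod_cast h)).1
    push_cast
    refine logb_le_succ_mul_binEnt hα hM₀ (avgDist_nonneg A) (avgDist_mem_Icc _)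
      (avgDist_mem_Icc _) (hαM ▸ hfiber false) (hα'M ▸ hfiber true) (avgDist_le_of_fibers hα ?_ ?_)
    · exact fun h => hne false (hαM ▸ mul_pos h hM₀)
    · exact fun h => hne true (hα'M ▸ mul_pos (sub_pos.2 h) hM₀)

/-- Theorem 3.9: for nonempty `A ⊆ C_n` and `ρ = 1/2 - Δ(A)/n`, one has `0 ≤ ρ ≤ 1/2` and
`1 - H(1/2 - ρ) ≤ (log₂|A|)/n ≤ H(ρ)`. -/
theorem stmt3 {n : ℕ} (hn : 1 ≤ n) (A : Set (Fin n → Bool)) (hA : A.Nonempty)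
    (ρ : ℝ) (hρ : ρ = 1 / 2 - avgDist A / n) :
    0 ≤ ρ ∧ ρ ≤ 1 / 2 ∧
      1 - binEnt (1 / 2 - ρ) ≤ Real.logb 2 (Nat.card A) / n ∧
      Real.logb 2 (Nat.card A) / n ≤ binEnt ρ := by
  have hn' : (0 : ℝ) < n := by exact_mod_cast hn
  have hρ_mem := hρ ▸ half_sub_div_mem_Icc (avgDist_mem_Icc A)
  have hlower := card_mul_one_sub_binEnt_le_logb_card hA
  rw [Fintype.card_fin] at hlower
  refine ⟨hρ_mem.1, hρ_mem.2, ?_, ?_⟩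
  · rw [le_div_iff₀ hn', hρ, sub_sub_cancel, mul_comm]
    exact hlower
  · rw [div_le_iff₀ hn', mul_comm, hρ]
    exact logb_card_le_mul_binEnt hA
end

section
/- For every c₁ < 2 and every c₂ > 1 there exists δ > 0 with the following property: for every n ≥ 1 and every nonempty subset A ⊆ C_n, if ρ = 1/2 − Δ(A)/n satisfies 0 < ρ ≤ δ, then c₁·ρ² ≤ (ln|A|)/n ≤ c₂·ρ·ln(1/ρ). -/
namespace Stmt4Aux

open Finset Real

lemma distToSet_le_of_mem {ι : Type*} [Fintype ι] {a b : ι → Bool} {A : Set (ι → Bool)}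
    (hb : b ∈ A) : distToSet a A ≤ hammingDist a b :=
  Nat.sInf_le ⟨b, hb, rfl⟩

lemma exists_distToSet {ι : Type*} [Fintype ι] (a : ι → Bool) {A : Set (ι → Bool)}
    (hA : A.Nonempty) : ∃ b ∈ A, distToSet a A = hammingDist a b := by
  obtain ⟨b, hb, h⟩ := Nat.sInf_mem (hA.image fun b => hammingDist a b)
  exact ⟨b, hb, h.symm⟩

lemma hammingDist_eq_sum {n : ℕ} (x y : Fin n → Bool) :
    hammingDist x y = ∑ i, if x i ≠ y i then 1 else 0 := by
  classical
  rw [hammingDist, Finset.card_filter]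

lemma hammingDist_cons {n : ℕ} (b c : Bool) (y z : Fin n → Bool) :
    hammingDist (Fin.cons b y : Fin (n+1) → Bool) (Fin.cons c z) = (if b ≠ c then 1 else 0) + hammingDist y z := by
  rw [hammingDist_eq_sum, hammingDist_eq_sum, Fin.sum_univ_succ]
  simp

/-- The equivalence between `Bool × cube n` and `cube (n+1)` by `Fin.cons`. -/
def consEquiv (n : ℕ) : Bool × (Fin n → Bool) ≃ (Fin (n + 1) → Bool) where
  toFun p := (Fin.cons p.1 p.2 : Fin (n+1) → Bool)
  invFun x := (x 0, Fin.tail x)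
  left_inv := by rintro ⟨b, y⟩; simp
  right_inv := fun x => Fin.cons_self_tail x

lemma sum_cube_succ {n : ℕ} {M : Type*} [AddCommMonoid M] (f : (Fin (n + 1) → Bool) → M) :
    ∑ x : Fin (n + 1) → Bool, f x
      = ∑ y : Fin n → Bool, (f (Fin.cons false y : Fin (n+1) → Bool) + f (Fin.cons true y : Fin (n+1) → Bool)) := by
  rw [← Equiv.sum_comp (consEquiv n) f, Fintype.sum_prod_type_right]
  simp [consEquiv, Fintype.sum_bool, add_comm]

/-- The slice of `F` by the value of the first coordinate. -/
def side {n : ℕ} (F : Finset (Fin (n + 1) → Bool)) (b : Bool) : Finset (Fin n → Bool) :=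
  Finset.univ.filter (fun y => (Fin.cons b y : Fin (n+1) → Bool) ∈ F)

lemma mem_side {n : ℕ} {F : Finset (Fin (n + 1) → Bool)} {b : Bool} {y : Fin n → Bool} :
    y ∈ side F b ↔ (Fin.cons b y : Fin (n+1) → Bool) ∈ F := by simp [side]

lemma side_nonempty {n : ℕ} {F : Finset (Fin (n + 1) → Bool)} (hF : F.Nonempty) :
    (side F false).Nonempty ∨ (side F true).Nonempty := by
  obtain ⟨x, hx⟩ := hF
  have hx' : (Fin.cons (x 0) (Fin.tail x) : Fin (n+1) → Bool) ∈ F := by rwa [Fin.cons_self_tail]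
  cases hb : x 0 with
  | false => exact Or.inl ⟨Fin.tail x, mem_side.2 (by rwa [hb] at hx')⟩
  | true => exact Or.inr ⟨Fin.tail x, mem_side.2 (by rwa [hb] at hx')⟩

lemma card_split {n : ℕ} (F : Finset (Fin (n + 1) → Bool)) :
    F.card = (side F false).card + (side F true).card := by
  classical
  have hinj : ∀ b : Bool,
      Function.Injective (fun y : Fin n → Bool => (Fin.cons b y : Fin (n+1) → Bool)) :=
    fun b y z h => by
      have h2 := congrArg Fin.tail h
      rwa [Fin.tail_cons, Fin.tail_cons] at h2
  have hF : F = (side F false).image (fun y => (Fin.cons false y : Fin (n+1) → Bool))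
      ∪ (side F true).image (fun y => (Fin.cons true y : Fin (n+1) → Bool)) := by
    ext x
    simp only [Finset.mem_union, Finset.mem_image]
    constructor
    · intro hx
      have hx' : (Fin.cons (x 0) (Fin.tail x) : Fin (n+1) → Bool) ∈ F := by
        rwa [Fin.cons_self_tail]
      cases hb : x 0 with
      | false =>
        exact Or.inl ⟨Fin.tail x, mem_side.2 (by rwa [hb] at hx'), by
          rw [← hb, Fin.cons_self_tail]⟩
      | true =>
        exact Or.inr ⟨Fin.tail x, mem_side.2 (by rwa [hb] at hx'), by
          rw [← hb, Fin.cons_self_tail]⟩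
    · rintro (⟨y, hy, rfl⟩ | ⟨y, hy, rfl⟩) <;> exact mem_side.1 hy
  have hdisj : Disjoint ((side F false).image (fun y => (Fin.cons false y : Fin (n+1) → Bool)))
      ((side F true).image (fun y => (Fin.cons true y : Fin (n+1) → Bool))) := by
    rw [Finset.disjoint_left]
    rintro x hx hx'
    obtain ⟨y, _, rfl⟩ := Finset.mem_image.1 hx
    obtain ⟨z, _, hz⟩ := Finset.mem_image.1 hx'
    have hcontr : (true : Bool) = false := by
      have h0 := congrFun hz 0
      simp at h0
    simp at hcontr
  conv_lhs => rw [hF]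
  rw [Finset.card_union_of_disjoint hdisj,
    Finset.card_image_of_injective _ (hinj false), Finset.card_image_of_injective _ (hinj true)]

lemma dist_cons_le {n : ℕ} {F : Finset (Fin (n + 1) → Bool)} {c : Bool}
    (h : (side F c).Nonempty) (b : Bool) (y : Fin n → Bool) :
    distToSet (Fin.cons b y : Fin (n+1) → Bool) ↑F ≤ (if b ≠ c then 1 else 0) + distToSet y ↑(side F c) := by
  have h' : (↑(side F c) : Set (Fin n → Bool)).Nonempty := Finset.coe_nonempty.mpr h
  obtain ⟨a, ha, hda⟩ := exists_distToSet y h'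
  have haF : (Fin.cons c a : Fin (n+1) → Bool) ∈ F := mem_side.1 (by exact_mod_cast ha)
  calc distToSet (Fin.cons b y : Fin (n+1) → Bool) ↑F ≤ hammingDist (Fin.cons b y : Fin (n+1) → Bool) (Fin.cons c a) :=
        distToSet_le_of_mem (by exact_mod_cast haF)
    _ = (if b ≠ c then 1 else 0) + hammingDist y a := hammingDist_cons _ _ _ _
    _ = (if b ≠ c then 1 else 0) + distToSet y ↑(side F c) := by rw [hda]

lemma sum_ineq_A {n : ℕ} {F : Finset (Fin (n + 1) → Bool)}
    (h0 : (side F false).Nonempty) (h1 : (side F true).Nonempty) :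
    ∑ x : Fin (n + 1) → Bool, distToSet x ↑F
      ≤ (∑ y : Fin n → Bool, distToSet y ↑(side F false))
        + ∑ y : Fin n → Bool, distToSet y ↑(side F true) := by
  rw [sum_cube_succ (n := n) (fun x : Fin (n+1) → Bool => distToSet x ↑F), ← Finset.sum_add_distrib]
  refine Finset.sum_le_sum fun y _ => ?_
  have hA := dist_cons_le h0 false y
  have hB := dist_cons_le h1 true y
  simp only [ne_eq, not_true_eq_false, if_false, if_neg, zero_add] at hA hB
  omega

lemma sum_ineq_B {n : ℕ} {F : Finset (Fin (n + 1) → Bool)} {b : Bool}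
    (hb : (side F b).Nonempty) :
    ∑ x : Fin (n + 1) → Bool, distToSet x ↑F
      ≤ 2 * (∑ y : Fin n → Bool, distToSet y ↑(side F b)) + 2 ^ n := by
  rw [sum_cube_succ (n := n) (fun x : Fin (n+1) → Bool => distToSet x ↑F)]
  have key : ∀ y : Fin n → Bool,
      distToSet (Fin.cons false y : Fin (n+1) → Bool) ↑F
        + distToSet (Fin.cons true y : Fin (n+1) → Bool) ↑F
      ≤ 2 * distToSet y ↑(side F b) + 1 := by
    intro y
    have hA := dist_cons_le hb false y
    have hB := dist_cons_le hb true y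
    cases b <;> simp at hA hB <;> omega
  calc ∑ y : Fin n → Bool, (distToSet (Fin.cons false y : Fin (n+1) → Bool) ↑F
        + distToSet (Fin.cons true y : Fin (n+1) → Bool) ↑F)
      ≤ ∑ y : Fin n → Bool, (2 * distToSet y ↑(side F b) + 1) :=
        Finset.sum_le_sum fun y _ => key y
    _ = 2 * (∑ y : Fin n → Bool, distToSet y ↑(side F b)) + 2 ^ n := by
        rw [Finset.sum_add_distrib, ← Finset.mul_sum]
        simp [Finset.card_univ]

theorem key_upper : ∀ n : ℕ, ∀ F : Finset (Fin n → Bool), F.Nonempty →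
    ∀ t : ℝ, 0 < t → t ≤ 1 →
    (F.card : ℝ) ≤ t ^ ((∑ x : Fin n → Bool, (distToSet x ↑F : ℝ)) / 2 ^ n - n / 2)
      * (1 + t) ^ n := by
  intro n
  induction n with
  | zero =>
    intro F hF t ht ht1
    obtain ⟨x, hx⟩ := hF
    have hcard : F.card = 1 := by
      refine le_antisymm (Finset.card_le_one.2 fun a _ b _ => Subsingleton.elim a b) ?_
      exact Finset.card_pos.2 ⟨x, hx⟩
    have hD : ∀ z : Fin 0 → Bool, distToSet z ↑F = 0 := by
      intro z
      have hz : z = x := Subsingleton.elim z x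
      have : distToSet z ↑F ≤ hammingDist z x := distToSet_le_of_mem (by exact_mod_cast hx)
      simpa [hz, hammingDist_self] using this
    simp [hcard, hD, Real.rpow_zero]
  | succ n ih =>
    intro F hF t ht ht1
    classical
    have h2n : (0:ℝ) < 2 ^ n := by positivity
    have ht1' : (1:ℝ) ≤ 1 + t := by linarith
    push_cast
    set S : ℝ := ∑ x : Fin (n+1) → Bool, (distToSet x ↑F : ℝ) with hS
    have hP : (0:ℝ) < t ^ (S / 2 ^ (n+1) - ((n:ℝ)+1) / 2) := Real.rpow_pos_of_pos ht _
    have caseB : ∀ b : Bool, (side F b).Nonempty → side F (!b) = ∅ →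
        (F.card : ℝ) ≤ t ^ (S / 2 ^ (n+1) - ((n:ℝ)+1) / 2) * (1 + t) ^ (n+1) := by
      intro b hb hnb
      set Sb : ℝ := ∑ y : Fin n → Bool, (distToSet y ↑(side F b) : ℝ) with hSb
      have hcard : F.card = (side F b).card := by
        have hsplit := card_split F
        cases b
        · simp only [Bool.not_false] at hnb; rw [hnb] at hsplit; simpa using hsplit
        · simp only [Bool.not_true] at hnb; rw [hnb] at hsplit; simpa using hsplit
      have hBr : S ≤ 2 * Sb + 2 ^ n := by
        have := sum_ineq_B hb
        rw [hS, hSb]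
        push_cast
        exact_mod_cast this
      have e0 : S / 2 ^ (n+1) - ((n:ℝ)+1) / 2 ≤ Sb / 2 ^ n - (n:ℝ) / 2 := by
        have hdiv : S / 2 ^ (n+1) ≤ (2 * Sb + 2 ^ n) / 2 ^ (n+1) := by
          exact div_le_div_of_nonneg_right hBr (by positivity)
        have heq : (2 * Sb + 2 ^ n) / 2 ^ (n+1) = Sb / 2 ^ n + 1 / 2 := by
          rw [pow_succ]
          field_simp
        rw [heq] at hdiv
        linarith
      calc (F.card : ℝ) = ((side F b).card : ℝ) := by rw [hcard]
        _ ≤ t ^ (Sb / 2 ^ n - (n:ℝ) / 2) * (1 + t) ^ n := by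
            have := ih (side F b) hb t ht ht1
            rw [hSb]
            push_cast
            exact_mod_cast this
        _ ≤ t ^ (S / 2 ^ (n+1) - ((n:ℝ)+1) / 2) * (1 + t) ^ (n+1) := by
            have h1 : t ^ (Sb / 2 ^ n - (n:ℝ) / 2)
                ≤ t ^ (S / 2 ^ (n+1) - ((n:ℝ)+1) / 2) :=
              Real.rpow_le_rpow_of_exponent_ge ht ht1 e0
            have h2 : ((1:ℝ) + t) ^ n ≤ (1 + t) ^ (n+1) :=
              pow_le_pow_right₀ ht1' (Nat.le_succ n)
            exact mul_le_mul h1 h2 (by positivity) (le_of_lt hP)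
    by_cases h0 : (side F false).Nonempty
    · by_cases h1 : (side F true).Nonempty
      · -- both sides nonempty
        set S0 : ℝ := ∑ y : Fin n → Bool, (distToSet y ↑(side F false) : ℝ) with hS0
        set S1 : ℝ := ∑ y : Fin n → Bool, (distToSet y ↑(side F true) : ℝ) with hS1
        have hAr : S ≤ S0 + S1 := by
          have := sum_ineq_A h0 h1
          rw [hS, hS0, hS1]; push_cast; exact_mod_cast this
        have hB0r : S ≤ 2 * S0 + 2 ^ n := by
          have := sum_ineq_B h0
          rw [hS, hS0]; push_cast; exact_mod_cast this
        have hB1r : S ≤ 2 * S1 + 2 ^ n := by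
          have := sum_ineq_B h1
          rw [hS, hS1]; push_cast; exact_mod_cast this
        set Ex : ℝ := S / 2 ^ (n+1) - ((n:ℝ)+1) / 2 with hEx
        set E0 : ℝ := S0 / 2 ^ n - (n:ℝ) / 2 with hE0
        set E1 : ℝ := S1 / 2 ^ n - (n:ℝ) / 2 with hE1
        have hdivB : ∀ Sb : ℝ, S ≤ 2 * Sb + 2 ^ n →
            S / 2 ^ (n+1) ≤ Sb / 2 ^ n + 1 / 2 := by
          intro Sb hBr
          have hdiv : S / 2 ^ (n+1) ≤ (2 * Sb + 2 ^ n) / 2 ^ (n+1) :=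
            div_le_div_of_nonneg_right hBr (by positivity)
          have heq : (2 * Sb + 2 ^ n) / 2 ^ (n+1) = Sb / 2 ^ n + 1 / 2 := by
            rw [pow_succ]; field_simp
          rw [heq] at hdiv
          linarith
        have e0 : Ex ≤ E0 := by have := hdivB S0 hB0r; rw [hEx, hE0]; linarith
        have e1 : Ex ≤ E1 := by have := hdivB S1 hB1r; rw [hEx, hE1]; linarith
        have esum : 1 + (Ex + Ex) ≤ E0 + E1 := by
          have hdiv : S / 2 ^ (n+1) ≤ (S0 + S1) / 2 ^ (n+1) :=
            div_le_div_of_nonneg_right hAr (by positivity)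
          have heq : (S0 + S1) / 2 ^ (n+1) = (S0 / 2 ^ n) / 2 + (S1 / 2 ^ n) / 2 := by
            rw [pow_succ]; field_simp; try ring
          rw [hEx, hE0, hE1]
          rw [heq] at hdiv
          linarith
        set p : ℝ := t ^ E0 with hp'
        set q : ℝ := t ^ E1 with hq'
        set P : ℝ := t ^ Ex with hP'
        have hp : p ≤ P := Real.rpow_le_rpow_of_exponent_ge ht ht1 e0
        have hq : q ≤ P := Real.rpow_le_rpow_of_exponent_ge ht ht1 e1
        have hpq : p * q ≤ t * P ^ 2 := by
          have h1' : p * q = t ^ (E0 + E1) := (Real.rpow_add ht _ _).symm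
          have h2' : t * P ^ 2 = t ^ (1 + (Ex + Ex)) := by
            rw [Real.rpow_add ht, Real.rpow_add ht, Real.rpow_one, sq]
          rw [h1', h2']
          exact Real.rpow_le_rpow_of_exponent_ge ht ht1 esum
        have hPpos : (0:ℝ) < P := Real.rpow_pos_of_pos ht _
        have hppos : (0:ℝ) < p := Real.rpow_pos_of_pos ht _
        have hqpos : (0:ℝ) < q := Real.rpow_pos_of_pos ht _
        have hfin : p + q ≤ (1 + t) * P := by
          nlinarith [mul_nonneg (sub_nonneg.2 hp) (sub_nonneg.2 hq), hpq, hPpos,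
            mul_pos hPpos hPpos]
        have hcards : (F.card : ℝ) = ((side F false).card : ℝ) + ((side F true).card : ℝ) := by
          exact_mod_cast card_split F
        have hc0 : ((side F false).card : ℝ) ≤ p * (1 + t) ^ n := by
          have := ih (side F false) h0 t ht ht1
          rw [hp', hE0, hS0]; push_cast; exact_mod_cast this
        have hc1 : ((side F true).card : ℝ) ≤ q * (1 + t) ^ n := by
          have := ih (side F true) h1 t ht ht1
          rw [hq', hE1, hS1]; push_cast; exact_mod_cast this
        have hpow : (0:ℝ) ≤ (1 + t) ^ n := by positivity
        calc (F.card : ℝ) = ((side F false).card : ℝ) + ((side F true).card : ℝ) := hcards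
          _ ≤ (p + q) * (1 + t) ^ n := by rw [add_mul]; exact add_le_add hc0 hc1
          _ ≤ ((1 + t) * P) * (1 + t) ^ n := mul_le_mul_of_nonneg_right hfin hpow
          _ = P * (1 + t) ^ (n+1) := by rw [pow_succ]; ring
      · exact caseB false h0 (Finset.not_nonempty_iff_eq_empty.1 (by simpa using h1))
    · by_cases h1 : (side F true).Nonempty
      · exact caseB true h1 (Finset.not_nonempty_iff_eq_empty.1 (by simpa using h0))
      · rcases side_nonempty hF with h | h
        · exact absurd h h0
        · exact absurd h h1

lemma sum_bool_exp (lam : ℝ) (c : Bool) :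
    ∑ b : Bool, Real.exp (lam * (1/2 - (if b ≠ c then (1:ℝ) else 0)))
      = 2 * Real.cosh (lam / 2) := by
  rw [Real.cosh_eq, Fintype.sum_bool]
  cases c <;> simp <;>
    rw [show lam * (2⁻¹ - 1) = -(lam/2) by ring, show lam * 2⁻¹ = lam/2 by ring] <;>
    ring

set_option maxHeartbeats 1000000 in
lemma per_point {n : ℕ} (lam : ℝ) (a : Fin n → Bool) :
    ∑ x : Fin n → Bool, Real.exp (lam * ((n:ℝ)/2 - (hammingDist x a : ℝ)))
      = (2 * Real.cosh (lam / 2)) ^ n := by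
  classical
  have hterm : ∀ x : Fin n → Bool, lam * ((n:ℝ)/2 - (hammingDist x a : ℝ))
      = ∑ i, lam * (1/2 - (if x i ≠ a i then (1:ℝ) else 0)) := by
    intro x
    have h1 : ((hammingDist x a : ℕ) : ℝ) = ∑ i, (if x i ≠ a i then (1:ℝ) else 0) := by
      rw [hammingDist_eq_sum]
      push_cast
      rfl
    rw [← Finset.mul_sum, Finset.sum_sub_distrib, Finset.sum_const, Finset.card_univ,
      Fintype.card_fin, nsmul_eq_mul, h1]
    ring
  calc ∑ x : Fin n → Bool, Real.exp (lam * ((n:ℝ)/2 - (hammingDist x a : ℝ)))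
      = ∑ x : Fin n → Bool, ∏ i, Real.exp (lam * (1/2 - (if x i ≠ a i then (1:ℝ) else 0))) := by
        refine Finset.sum_congr rfl fun x _ => ?_
        rw [hterm x, Real.exp_sum]
    _ = ∏ i : Fin n, ∑ b : Bool, Real.exp (lam * (1/2 - (if b ≠ a i then (1:ℝ) else 0))) :=
        (Fintype.prod_sum fun i b => Real.exp (lam * (1/2 - (if b ≠ a i then (1:ℝ) else 0)))).symm
    _ = ∏ _i : Fin n, (2 * Real.cosh (lam / 2)) :=
        Finset.prod_congr rfl fun i _ => sum_bool_exp lam (a i)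
    _ = (2 * Real.cosh (lam / 2)) ^ n := by
        rw [Finset.prod_const, Finset.card_univ, Fintype.card_fin]

lemma card_cube (n : ℕ) : Fintype.card (Fin n → Bool) = 2 ^ n := by
  simp [Fintype.card_fun]

set_option maxHeartbeats 1000000 in
lemma key_lower {n : ℕ} (F : Finset (Fin n → Bool)) (hF : F.Nonempty) (lam : ℝ) :
    Real.exp (lam * ((n:ℝ)/2 - (∑ x : Fin n → Bool, (distToSet x ↑F : ℝ)) / 2 ^ n))
      ≤ F.card * Real.exp (lam ^ 2 * n / 8) := by
  classical
  have h2n : (0:ℝ) < 2 ^ n := by positivity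
  set S : ℝ := ∑ x : Fin n → Bool, (distToSet x ↑F : ℝ) with hS
  set g : (Fin n → Bool) → ℝ := fun x => lam * ((n:ℝ)/2 - (distToSet x ↑F : ℝ)) with hg
  have hw1 : ∑ _x : Fin n → Bool, ((2:ℝ)^n)⁻¹ = 1 := by
    rw [Finset.sum_const, Finset.card_univ, card_cube, nsmul_eq_mul]
    push_cast
    field_simp
  have jensen := convexOn_exp.map_sum_le (t := Finset.univ)
    (w := fun _ : Fin n → Bool => ((2:ℝ)^n)⁻¹) (p := g)
    (fun _ _ => by positivity) hw1 (fun _ _ => Set.mem_univ _)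
  have hLHS : ∑ x : Fin n → Bool, ((2:ℝ)^n)⁻¹ • g x = lam * ((n:ℝ)/2 - S / 2 ^ n) := by
    simp only [smul_eq_mul, hg]
    rw [← Finset.mul_sum]
    rw [show (∑ x : Fin n → Bool, lam * ((n:ℝ)/2 - (distToSet x ↑F : ℝ)))
        = lam * (∑ x : Fin n → Bool, ((n:ℝ)/2 - (distToSet x ↑F : ℝ))) from
      (Finset.mul_sum _ _ _).symm]
    rw [Finset.sum_sub_distrib, Finset.sum_const, Finset.card_univ, card_cube, nsmul_eq_mul, ← hS]
    push_cast
    field_simp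
  have hstep2 : ∀ x : Fin n → Bool, Real.exp (g x)
      ≤ ∑ a ∈ F, Real.exp (lam * ((n:ℝ)/2 - (hammingDist x a : ℝ))) := by
    intro x
    have hne : (↑F : Set (Fin n → Bool)).Nonempty := Finset.coe_nonempty.mpr hF
    obtain ⟨a₀, ha₀, hda₀⟩ := exists_distToSet x hne
    have ha₀F : a₀ ∈ F := by exact_mod_cast ha₀
    have hgx : Real.exp (g x) = Real.exp (lam * ((n:ℝ)/2 - (hammingDist x a₀ : ℝ))) := by
      rw [hg]
      simp only []
      rw [hda₀]
    rw [hgx]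
    exact Finset.single_le_sum
      (f := fun a => Real.exp (lam * ((n:ℝ)/2 - (hammingDist x a : ℝ))))
      (fun a _ => (Real.exp_pos _).le) ha₀F
  have hcosh : (2 * Real.cosh (lam / 2)) ^ n ≤ (2 * Real.exp (lam ^ 2 / 8)) ^ n := by
    apply pow_le_pow_left₀ (by positivity)
    have := Real.cosh_le_exp_half_sq (lam / 2)
    rw [show (lam/2)^2/2 = lam^2/8 by ring] at this
    linarith
  calc Real.exp (lam * ((n:ℝ)/2 - S / 2 ^ n))
      = Real.exp (∑ x : Fin n → Bool, ((2:ℝ)^n)⁻¹ • g x) := by rw [hLHS]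
    _ ≤ ∑ x : Fin n → Bool, ((2:ℝ)^n)⁻¹ • Real.exp (g x) := jensen
    _ ≤ ∑ x : Fin n → Bool, ((2:ℝ)^n)⁻¹
          * ∑ a ∈ F, Real.exp (lam * ((n:ℝ)/2 - (hammingDist x a : ℝ))) := by
        refine Finset.sum_le_sum fun x _ => ?_
        rw [smul_eq_mul]
        exact mul_le_mul_of_nonneg_left (hstep2 x) (by positivity)
    _ = ((2:ℝ)^n)⁻¹ * ∑ a ∈ F, ∑ x : Fin n → Bool,
          Real.exp (lam * ((n:ℝ)/2 - (hammingDist x a : ℝ))) := by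
        rw [← Finset.mul_sum, Finset.sum_comm]
    _ = ((2:ℝ)^n)⁻¹ * ∑ a ∈ F, (2 * Real.cosh (lam / 2)) ^ n := by
        rw [Finset.sum_congr rfl fun a _ => per_point lam a]
    _ ≤ ((2:ℝ)^n)⁻¹ * ∑ _a ∈ F, (2 * Real.exp (lam ^ 2 / 8)) ^ n := by
        refine mul_le_mul_of_nonneg_left (Finset.sum_le_sum fun a _ => hcosh) (by positivity)
    _ = F.card * Real.exp (lam ^ 2 * n / 8) := by
        rw [Finset.sum_const, nsmul_eq_mul, mul_pow, ← Real.exp_nat_mul]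
        rw [show (n:ℝ) * (lam^2/8) = lam^2 * n / 8 by ring]
        field_simp

end Stmt4Aux

set_option maxHeartbeats 1000000 in
/-- Corollary 3.11: for every `c₁ < 2` and `c₂ > 1` there is `δ > 0` such that for every
`n ≥ 1` and every nonempty `A ⊆ C_n`, if `ρ = 1/2 - Δ(A)/n` satisfies `0 < ρ ≤ δ` then
`c₁·ρ² ≤ (ln |A|)/n ≤ c₂·ρ·ln(1/ρ)`. -/
theorem stmt4 (c₁ c₂ : ℝ) (h₁ : c₁ < 2) (h₂ : 1 < c₂) :
    ∃ δ : ℝ, 0 < δ ∧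
      ∀ n : ℕ, 1 ≤ n → ∀ A : Set (Fin n → Bool), A.Nonempty →
        ∀ ρ : ℝ, ρ = 1 / 2 - avgDist A / n → 0 < ρ → ρ ≤ δ →
          c₁ * ρ ^ 2 ≤ Real.log (Nat.card A) / n ∧
            Real.log (Nat.card A) / n ≤ c₂ * ρ * Real.log (1 / ρ) := by
  classical
  open Stmt4Aux in
  refine ⟨Real.exp (-(c₂ - 1)⁻¹), Real.exp_pos _, ?_⟩
  intro n hn A hA ρ hρ hρ0 hρδ
  have hc2 : (0:ℝ) < c₂ - 1 := by linarith
  have hδ1 : Real.exp (-(c₂ - 1)⁻¹) < 1 := by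
    rw [Real.exp_lt_one_iff]
    simp only [neg_neg, Left.neg_neg_iff]
    positivity
  have hnR : (0:ℝ) < n := by exact_mod_cast hn
  have hfin : A.Finite := A.toFinite
  set F := hfin.toFinset with hFdef
  have hFne : F.Nonempty := hfin.toFinset_nonempty.mpr hA
  have hcoe : (↑F : Set (Fin n → Bool)) = A := hfin.coe_toFinset
  have hcardA : ((Nat.card A : ℕ) : ℝ) = (F.card : ℝ) := by
    rw [Nat.card_coe_set_eq, Set.ncard_eq_toFinset_card A hfin]
  have hm1 : 1 ≤ F.card := hFne.card_pos
  have hmpos : (0:ℝ) < F.card := by exact_mod_cast hm1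
  set S : ℝ := ∑ x : Fin n → Bool, (distToSet x ↑F : ℝ) with hS
  have havg : avgDist A = S / 2 ^ n := by
    rw [← hcoe]
    simp only [avgDist, Fintype.card_fin, hS]
    rw [inv_mul_eq_div]
  have hρn : ρ * n = (n:ℝ)/2 - S / 2 ^ n := by
    have hρ' : ρ = 1/2 - (S / 2 ^ n) / n := by rw [hρ, havg]
    rw [hρ']
    field_simp
  constructor
  · -- lower bound
    have hKL := key_lower F hFne (4 * ρ)
    rw [← hρn] at hKL
    have hlog := Real.log_le_log (Real.exp_pos _) hKL
    rw [Real.log_exp, Real.log_mul (ne_of_gt hmpos) (Real.exp_ne_zero _),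
      Real.log_exp] at hlog
    rw [hcardA, le_div_iff₀ hnR]
    nlinarith [hlog, sq_nonneg ρ, mul_pos (mul_pos hρ0 hρ0) hnR]
  · -- upper bound
    have hρ1 : ρ ≤ 1 := le_of_lt (lt_of_le_of_lt hρδ hδ1)
    have hKU := key_upper n F hFne ρ hρ0 hρ1
    have hexp : S / 2 ^ n - (n:ℝ)/2 = -(ρ * n) := by linarith
    rw [hexp] at hKU
    have hlogm := Real.log_le_log hmpos hKU
    rw [Real.log_mul (ne_of_gt (Real.rpow_pos_of_pos hρ0 _)) (by positivity),
      Real.log_rpow hρ0, Real.log_pow] at hlogm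
    have hlog1ρ : Real.log (1 + ρ) ≤ ρ := by
      have := Real.log_le_sub_one_of_pos (show (0:ℝ) < 1 + ρ by linarith)
      linarith
    have hL : Real.log (1/ρ) = -Real.log ρ := by rw [one_div, Real.log_inv]
    have hLge : 1 ≤ (c₂ - 1) * Real.log (1/ρ) := by
      have hlogρ : Real.log ρ ≤ -(c₂ - 1)⁻¹ := by
        calc Real.log ρ ≤ Real.log (Real.exp (-(c₂ - 1)⁻¹)) := Real.log_le_log hρ0 hρδ
          _ = -(c₂ - 1)⁻¹ := Real.log_exp _
      rw [hL]
      calc (1:ℝ) = (c₂ - 1) * (c₂ - 1)⁻¹ := by field_simp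
        _ ≤ (c₂ - 1) * (-Real.log ρ) := by
            apply mul_le_mul_of_nonneg_left (by linarith) (le_of_lt hc2)
    have hLpos : 0 < Real.log (1/ρ) := by nlinarith
    rw [hcardA, div_le_iff₀ hnR]
    have hmul : ρ * (n:ℝ) ≤ ρ * n * ((c₂ - 1) * Real.log (1/ρ)) := by
      nlinarith [mul_pos hρ0 hnR]
    calc Real.log F.card ≤ -(ρ * n) * Real.log ρ + (n:ℝ) * Real.log (1 + ρ) := hlogm
      _ ≤ ρ * n * Real.log (1/ρ) + n * ρ := by
          rw [hL]
          have h2 : (n:ℝ) * Real.log (1 + ρ) ≤ n * ρ :=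
            mul_le_mul_of_nonneg_left hlog1ρ (le_of_lt hnR)
          nlinarith [h2]
      _ ≤ c₂ * ρ * Real.log (1/ρ) * n := by nlinarith [hmul]
end

section
/- For any real numbers ε, γ, p with 0 ≤ ε < 1, γ ≥ 0, 0 < p ≤ 1, and q = 1−p, one has min{ pγ/2 + ln(1/(1+ε)), p·ln(1/(1−ε)) + q·ln(1/(1+ε)) } ≤ max{ 0, ln(1 + e^{γ/2}) − qγ/2 − ln 2 }. -/
/-!
Substitute `ε = tanh (v / 2)`, i.e. `v = log (1 + ε) - log (1 - ε) ≥ 0`, and put `T = γ / 2`,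
`h = log ∘ sigmoid`. Then `log (1 + ε) = h v - h 0` and the second term of the maximum is
`p T - (h T - h 0)`, so the inequality only uses that `h` is increasing and concave
(its derivative is `sigmoid (-x)`). If `T ≤ v`, monotonicity handles the first term of the
minimum. If `v < T` and the second term is positive, then `p` exceeds the slope of `h` on
`[0, v]`, hence by concavity its slope on `[v, T]`, which is exactly what is needed.
-/

open Real Set

lemma min_le_max_of_monotone_of_concaveOn {h : ℝ → ℝ} (hmono : Monotone h)
    (hconc : ConcaveOn ℝ (Ici 0) h) {p v T : ℝ} (hv : 0 ≤ v) :
    min (p * T - (h v - h 0)) (p * v - (h v - h 0)) ≤ max 0 (p * T - (h T - h 0)) := by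
  rcases le_or_gt T v with hTv | hvT
  · exact min_le_of_left_le (le_max_of_le_right (by linarith [hmono hTv]))
  rcases le_or_gt (p * v) (h v - h 0) with hneg | hpos
  · exact min_le_of_right_le (le_max_of_le_left (by linarith))
  have hv0 : 0 < v := hv.lt_of_ne (by rintro rfl; simp at hpos)
  have hslope : (h T - h v) / (T - v) ≤ (h v - h 0) / (v - 0) :=
    hconc.slope_anti_adjacent self_mem_Ici (hv0.trans hvT).le hv0 hvT
  have hp : (h v - h 0) / (v - 0) < p := by
    rw [sub_zero, div_lt_iff₀ hv0]; linarith
  have hrise : h T - h v ≤ p * (T - v) :=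
    (div_le_iff₀ (sub_pos.2 hvT)).1 (hslope.trans hp.le)
  exact min_le_of_right_le (le_max_of_le_right (by linarith))

namespace Real

lemma sigmoid_log_sub_log {a b : ℝ} (ha : 0 < a) (hb : 0 < b) :
    sigmoid (log a - log b) = a / (a + b) := by
  rw [sigmoid_def, neg_sub, exp_sub, exp_log ha, exp_log hb]
  field_simp

lemma log_sigmoid (x : ℝ) : log (sigmoid x) = x - log (1 + exp x) := by
  have h : 1 + exp (-x) = (1 + exp x) * exp (-x) := by
    rw [add_mul, one_mul, ← exp_add, add_neg_cancel, exp_zero, add_comm]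
  rw [sigmoid_def, log_inv, h, log_mul (by positivity) (exp_pos _).ne', log_exp]
  ring

lemma monotone_log_sigmoid : Monotone fun x ↦ log (sigmoid x) :=
  fun _ _ hab ↦ log_le_log (sigmoid_pos _) (sigmoid_le hab)

lemma hasDerivAt_log_sigmoid (x : ℝ) :
    HasDerivAt (fun y ↦ log (sigmoid y)) (sigmoid (-x)) x := by
  convert (hasDerivAt_sigmoid x).log (sigmoid_pos x).ne' using 1
  rw [sigmoid_neg]
  field_simp [(sigmoid_pos x).ne']

lemma concaveOn_log_sigmoid : ConcaveOn ℝ univ fun x ↦ log (sigmoid x) := by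
  have hderiv : deriv (fun y ↦ log (sigmoid y)) = fun x ↦ sigmoid (-x) :=
    funext fun x ↦ (hasDerivAt_log_sigmoid x).deriv
  refine AntitoneOn.concaveOn_of_deriv convex_univ
    (fun x _ ↦ (hasDerivAt_log_sigmoid x).continuousAt.continuousWithinAt)
    (fun x _ ↦ (hasDerivAt_log_sigmoid x).differentiableAt.differentiableWithinAt) ?_
  rw [hderiv]
  exact fun _ _ _ _ hab ↦ sigmoid_le (neg_le_neg hab)

end Real

theorem stmt14_general (ε γ p : ℝ) (hε0 : 0 ≤ ε) (hε1 : ε < 1) :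
    min (p * γ / 2 + Real.log (1 / (1 + ε)))
        (p * Real.log (1 / (1 - ε)) + (1 - p) * Real.log (1 / (1 + ε))) ≤
      max 0 (Real.log (1 + Real.exp (γ / 2)) - (1 - p) * γ / 2 - Real.log 2) := by
  have hplus : 0 < 1 + ε := by linarith
  have hminus : 0 < 1 - ε := by linarith
  have key := min_le_max_of_monotone_of_concaveOn monotone_log_sigmoid
    (concaveOn_log_sigmoid.subset (subset_univ _) (convex_Ici 0)) (p := p) (T := γ / 2)
    (sub_nonneg.2 (log_le_log hminus (by linarith)) : 0 ≤ log (1 + ε) - log (1 - ε))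
  have hv : log (sigmoid (log (1 + ε) - log (1 - ε))) - log (sigmoid 0) = log (1 + ε) := by
    rw [sigmoid_log_sub_log hplus hminus, sigmoid_zero, log_inv,
      log_div hplus.ne' (by norm_num), show 1 + ε + (1 - ε) = 2 by ring]
    ring
  have hT : log (sigmoid (γ / 2)) - log (sigmoid 0) = γ / 2 - log (1 + exp (γ / 2)) + log 2 := by
    rw [log_sigmoid, sigmoid_zero, log_inv]
    ring
  rw [hv, hT] at key
  rw [one_div, one_div, log_inv, log_inv]
  convert key using 2 <;> ring

/-- Lemma 6.5: for `0 ≤ ε < 1`, `γ ≥ 0`, `0 < p ≤ 1` and `q = 1 - p`,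
`min{pγ/2 + ln(1/(1+ε)), p·ln(1/(1-ε)) + q·ln(1/(1+ε))}
  ≤ max{0, ln(1+e^{γ/2}) - qγ/2 - ln 2}`. -/
theorem stmt14 (ε γ p : ℝ) (hε0 : 0 ≤ ε) (hε1 : ε < 1) (hγ : 0 ≤ γ)
    (hp0 : 0 < p) (hp1 : p ≤ 1) :
    min (p * γ / 2 + Real.log (1 / (1 + ε)))
        (p * Real.log (1 / (1 - ε)) + (1 - p) * Real.log (1 / (1 + ε))) ≤
      max 0 (Real.log (1 + Real.exp (γ / 2)) - (1 - p) * γ / 2 - Real.log 2) :=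
  stmt14_general ε γ p hε0 hε1
end
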